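/- Double robustness of the augmented inverse-probability-weighted functional for δ_e: fix e ∈ {0,1} and let q : 𝒳 → (0,1) be a working probability of {E=e} given X and â : 𝒳 → ℝ a working outcome regression. If q(x) = P(E=e|X=x) for all x with P(X=x) > 0, or â(x) = E(Y|E=e,X=x) for all x with P(X=x) > 0, then E[ (1{E=e}/q(X))·(Y − â(X)) + â(X) ] = δ_e := Σ_{x, P(X=x)>0} E(Y|E=e,X=x)·P(X=x). -/

import Mathlib

open MeasureTheory ProbabilityTheory

/-- Conditional probability of `B` given the event `A`: `P(B ∩ A) / P(A)`. -/
noncomputable def cP {Ω : Type*} [MeasurableSpace Ω] (μ : Measure Ω) (B A : Set Ω) : ℝ :=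
  (μ (B ∩ A)).toReal / (μ A).toReal

/-- Conditional expectation of `Y` given the event `A`: `E[Y·1_A] / P(A)`. -/
noncomputable def cE {Ω : Type*} [MeasurableSpace Ω] (μ : Measure Ω) (Y : Ω → ℝ) (A : Set Ω) : ℝ :=
  (∫ ω in A, Y ω ∂μ) / (μ A).toReal

/-!
On each stratum `{X = x}` the working models are constants `c = q x`, `a = â x`, and the
stratum's contribution to the integral is `(∫_{E=e, X=x} Y - a P(E=e, X=x)) / c + a P(X=x)`.
If `c = P(E=e | X=x)` this is `E(Y | E=e, X=x) P(X=x)` whatever `a` is; if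
`a = E(Y | E=e, X=x)` the first term vanishes whatever `c` is. Summing over the finitely
many strata gives `δ_e`.
-/

section

variable {Ω : Type*} [MeasurableSpace Ω] {μ : Measure Ω}

theorem integral_eq_sum_setIntegral_preimage_singleton {G 𝒳 : Type*} [NormedAddCommGroup G]
    [NormedSpace ℝ G] [Fintype 𝒳] [MeasurableSpace 𝒳] [MeasurableSingletonClass 𝒳]
    {X : Ω → 𝒳} (hX : Measurable X) {f : Ω → G} (hf : ∀ x, IntegrableOn f (X ⁻¹' {x}) μ) :
    ∫ ω, f ω ∂μ = ∑ x, ∫ ω in X ⁻¹' {x}, f ω ∂μ := by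
  rw [← integral_iUnion_fintype (fun x => hX (measurableSet_singleton x))
    (fun x y hxy => Set.pairwiseDisjoint_fiber X Set.univ trivial trivial hxy) hf,
    ← Set.preimage_iUnion, Set.iUnion_of_singleton, Set.preimage_univ, setIntegral_univ]

theorem cE_mul_measureReal [IsFiniteMeasure μ] (Y : Ω → ℝ) (A : Set Ω) :
    cE μ Y A * μ.real A = ∫ ω in A, Y ω ∂μ := by
  by_cases hA : μ A = 0
  · simp [measureReal_def, hA, Measure.restrict_eq_zero.mpr hA]
  · exact div_mul_cancel₀ _ (ENNReal.toReal_ne_zero.mpr ⟨hA, measure_ne_top μ A⟩)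

variable [IsFiniteMeasure μ] {A : Set Ω} {Y : Ω → ℝ}

theorem setIntegral_indicator_sub_div_add (hA : MeasurableSet A) (B : Set Ω)
    (hY : Integrable Y μ) (c a : ℝ) :
    ∫ ω in B, (A.indicator (fun ω => Y ω - a) ω / c + a) ∂μ =
      ((∫ ω in A ∩ B, Y ω ∂μ) - a * μ.real (A ∩ B)) / c + a * μ.real B := by
  have hYa : Integrable (fun ω => Y ω - a) μ := hY.sub (integrable_const a)
  rw [integral_add ((hYa.indicator hA).div_const c).integrableOn (integrable_const a).integrableOn,
    integral_div, setIntegral_indicator hA, Set.inter_comm,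
    integral_sub hY.integrableOn (integrable_const a).integrableOn,
    setIntegral_const, setIntegral_const, smul_eq_mul, smul_eq_mul, mul_comm a, mul_comm a]

theorem setIntegral_indicator_sub_div_add_eq_cE_mul (hA : MeasurableSet A) (B : Set Ω)
    (hY : Integrable Y μ) {c a : ℝ} (hc : c ≠ 0)
    (h : μ B ≠ 0 → c = cP μ A B ∨ a = cE μ Y (A ∩ B)) :
    ∫ ω in B, (A.indicator (fun ω => Y ω - a) ω / c + a) ∂μ = cE μ Y (A ∩ B) * μ.real B := by
  by_cases hB : μ B = 0
  · simp [measureReal_def, hB, Measure.restrict_eq_zero.mpr hB]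
  rw [setIntegral_indicator_sub_div_add hA B hY, ← cE_mul_measureReal]
  rcases h hB with rfl | rfl
  · simp only [cP, ← measureReal_def] at hc ⊢
    have hAB : μ.real (A ∩ B) ≠ 0 := (div_ne_zero_iff.mp hc).1
    field_simp
    ring
  · rw [sub_self, zero_div, zero_add]

end

open Classical in
theorem aipw_double_robustness_general
    {Ω 𝒳 : Type*} [MeasurableSpace Ω] [Fintype 𝒳]
    [MeasurableSpace 𝒳] [MeasurableSingletonClass 𝒳]
    (μ : Measure Ω) [IsProbabilityMeasure μ]
    (X : Ω → 𝒳) (E : Ω → Bool) (Y : Ω → ℝ)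
    (hX : Measurable X) (hE : Measurable E) (hY : Integrable Y μ)
    (e : Bool)
    -- working models
    (q : 𝒳 → ℝ) (ahat : 𝒳 → ℝ)
    (hq01 : ∀ x, q x ∈ Set.Ioo (0:ℝ) 1)
    -- at least one working model is correct
    (hdr : (∀ x : 𝒳, μ (X ⁻¹' {x}) ≠ 0 → q x = cP μ (E ⁻¹' {e}) (X ⁻¹' {x})) ∨
      (∀ x : 𝒳, μ (X ⁻¹' {x}) ≠ 0 → ahat x = cE μ Y (E ⁻¹' {e} ∩ X ⁻¹' {x}))) :
    ∫ ω, ((if E ω = e then (1:ℝ) else 0) / q (X ω) * (Y ω - ahat (X ω)) + ahat (X ω)) ∂μ =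
      ∑ x ∈ Finset.univ.filter (fun x => μ (X ⁻¹' {x}) ≠ 0),
        cE μ Y (E ⁻¹' {e} ∩ X ⁻¹' {x}) * (μ (X ⁻¹' {x})).toReal := by
  have hEe : MeasurableSet (E ⁻¹' {e}) := hE (measurableSet_singleton e)
  have hon_stratum : ∀ x, Set.EqOn
      (fun ω => (if E ω = e then (1:ℝ) else 0) / q (X ω) * (Y ω - ahat (X ω)) + ahat (X ω))
      (fun ω => (E ⁻¹' {e}).indicator (fun ω => Y ω - ahat x) ω / q x + ahat x) (X ⁻¹' {x}) := by
    rintro x ω rfl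
    by_cases h : E ω = e <;> simp [h, div_eq_inv_mul]
  have hX' (x : 𝒳) : MeasurableSet (X ⁻¹' {x}) := hX (measurableSet_singleton x)
  rw [integral_eq_sum_setIntegral_preimage_singleton hX, Finset.sum_filter_of_ne]
  · refine Finset.sum_congr rfl fun x _ => ?_
    rw [setIntegral_congr_fun (hX' x) (hon_stratum x)]
    exact setIntegral_indicator_sub_div_add_eq_cE_mul hEe _ hY (hq01 x).1.ne'
      fun hx => hdr.imp (· x hx) (· x hx)
  · exact fun x _ hx h0 => hx (by simp [h0])
  · intro x
    refine IntegrableOn.congr_fun ?_ (hon_stratum x).symm (hX' x)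
    exact ((((hY.sub (integrable_const _)).indicator hEe).div_const _).add
      (integrable_const _)).integrableOn

open Classical in
/-- double robustness of the augmented inverse-probability-weighted
functional for `δ_e`: if the working propensity `q` or the working outcome regression
`â` is correct, then `E[(1{E=e}/q(X))·(Y − â(X)) + â(X)] = δ_e`. -/
theorem aipw_double_robustness
    {Ω 𝒳 : Type*} [MeasurableSpace Ω] [Fintype 𝒳]
    [MeasurableSpace 𝒳] [MeasurableSingletonClass 𝒳]
    (μ : Measure Ω) [IsProbabilityMeasure μ]
    (X : Ω → 𝒳) (E : Ω → Bool) (Y : Ω → ℝ)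
    (hX : Measurable X) (hE : Measurable E) (hY : Integrable Y μ)
    (hposE : ∀ (e : Bool) (x : 𝒳), μ (X ⁻¹' {x}) ≠ 0 → μ (E ⁻¹' {e} ∩ X ⁻¹' {x}) ≠ 0)
    (e : Bool)
    -- working models
    (q : 𝒳 → ℝ) (ahat : 𝒳 → ℝ)
    (hq01 : ∀ x, q x ∈ Set.Ioo (0:ℝ) 1)
    -- at least one working model is correct
    (hdr : (∀ x : 𝒳, μ (X ⁻¹' {x}) ≠ 0 → q x = cP μ (E ⁻¹' {e}) (X ⁻¹' {x})) ∨
      (∀ x : 𝒳, μ (X ⁻¹' {x}) ≠ 0 → ahat x = cE μ Y (E ⁻¹' {e} ∩ X ⁻¹' {x}))) :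
    ∫ ω, ((if E ω = e then (1:ℝ) else 0) / q (X ω) * (Y ω - ahat (X ω)) + ahat (X ω)) ∂μ =
      ∑ x ∈ Finset.univ.filter (fun x => μ (X ⁻¹' {x}) ≠ 0),
        cE μ Y (E ⁻¹' {e} ∩ X ⁻¹' {x}) * (μ (X ⁻¹' {x})).toReal :=
  aipw_double_robustness_general μ X E Y hX hE hY e q ahat hq01 hdr
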